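/- Let N and d be integers with N ≥ d ≥ 2 and let ε and t be real numbers with 0 < ε ≤ d and t ≥ e·d·(d·ln N + ln(d/ε)). Then (N choose d)·d·(1 − (1/d)·(1 − 1/d)^{d−1})^t ≤ ε. -/

import Mathlib

/-!
A fixed row of Bernoulli(1/d) tests isolates a fixed column among a fixed set of `d`
columns with probability `p = (1/d)(1 - 1/d)^(d-1) ≥ 1/(e d)`, because
`(1 - 1/d)^(d-1) ≥ 1/e`. Hence `(1 - p)^t ≤ exp (-p t) ≤ exp (-t/(e d))`, and the lower bound
on `t` makes this at most `ε / (d N^d) ≤ ε / (d · (N choose d))`.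
-/

open Real

lemma exp_neg_inv_le_one_sub_inv_succ {n : ℕ} (hn : 0 < n) :
    exp (-(1 / n)) ≤ 1 - 1 / ((n : ℝ) + 1) := by
  have hn' : (0 : ℝ) < n := by exact_mod_cast hn
  have hsucc : 1 - 1 / ((n : ℝ) + 1) = (1 / (n : ℝ) + 1)⁻¹ := by field_simp; ring
  rw [exp_neg, hsucc]
  exact inv_anti₀ (by positivity) (add_one_le_exp _)

lemma exp_neg_one_le_one_sub_inv_pow_pred {d : ℕ} (hd : 1 ≤ d) :
    exp (-1) ≤ (1 - 1 / (d : ℝ)) ^ (d - 1) := by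
  obtain ⟨n, rfl⟩ := Nat.exists_eq_add_of_le' hd
  rw [Nat.add_sub_cancel]
  push_cast
  rcases n.eq_zero_or_pos with rfl | hn
  · simp
  calc exp (-1) = exp (-(1 / n)) ^ n := by
        rw [← exp_nat_mul]; congr 1; field_simp
    _ ≤ (1 - 1 / ((n : ℝ) + 1)) ^ n :=
        pow_le_pow_left₀ (exp_pos _).le (exp_neg_inv_le_one_sub_inv_succ hn) n

noncomputable def isolationProb (d : ℕ) : ℝ := 1 / (d : ℝ) * (1 - 1 / (d : ℝ)) ^ (d - 1)

lemma inv_exp_mul_le_isolationProb {d : ℕ} (hd : 1 ≤ d) :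
    1 / (exp 1 * d) ≤ isolationProb d := by
  unfold isolationProb
  rw [one_div_mul_eq_div, ← div_div, div_le_div_iff_of_pos_right (by positivity), one_div,
    ← exp_neg]
  exact exp_neg_one_le_one_sub_inv_pow_pred hd

lemma isolationProb_le_one {d : ℕ} (hd : 1 ≤ d) : isolationProb d ≤ 1 := by
  have hd' : (1 : ℝ) ≤ d := by exact_mod_cast hd
  have h1d : 1 / (d : ℝ) ≤ 1 := by rw [div_le_one (by positivity)]; exact hd'
  exact mul_le_one₀ h1d (by positivity)
    (pow_le_one₀ (sub_nonneg.2 h1d) (sub_le_self _ (by positivity)))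

lemma one_sub_rpow_le_exp_neg_mul {p t : ℝ} (hp : p ≤ 1) (ht : 0 ≤ t) :
    (1 - p) ^ t ≤ exp (-(p * t)) := by
  rw [← neg_mul, exp_mul]
  exact rpow_le_rpow (sub_nonneg.2 hp) (by linarith [add_one_le_exp (-p)]) ht

lemma exp_neg_natCast_mul_log_add_log_div {N d : ℕ} {ε : ℝ} (hN : 0 < N) (hd : 0 < d)
    (hε : 0 < ε) :
    exp (-((d : ℝ) * log N + log (d / ε))) = ε / (d * (N : ℝ) ^ d) := by
  have hd' : (0 : ℝ) < d := by exact_mod_cast hd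
  rw [neg_add, exp_add, exp_neg, exp_neg, exp_log (by positivity), exp_nat_mul,
    exp_log (by exact_mod_cast hN)]
  field_simp

/-- Let `N ≥ d ≥ 2` be integers and `ε, t` reals with `0 < ε ≤ d`
and `t ≥ e·d·(d·ln N + ln(d/ε))`.  Then
`(N choose d)·d·(1 - (1/d)·(1 - 1/d)^(d-1))^t ≤ ε`, where the outer power is the real
power. -/
theorem stmt14 (N d : ℕ) (hd : 2 ≤ d) (hdN : d ≤ N) (ε t : ℝ) (hε : 0 < ε)
    (hεd : ε ≤ d)
    (ht : Real.exp 1 * d * ((d : ℝ) * Real.log N + Real.log (d / ε)) ≤ t) :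
    (N.choose d : ℝ) * d * (1 - (1 / (d : ℝ)) * (1 - 1 / (d : ℝ)) ^ (d - 1)) ^ t ≤ ε := by
  change (N.choose d : ℝ) * d * (1 - isolationProb d) ^ t ≤ ε
  set S := (d : ℝ) * log N + log (d / ε)
  have hd0 : 0 < d := by omega
  have hN0 : 0 < N := by omega
  have hd0' : (0 : ℝ) < d := by exact_mod_cast hd0
  have hed : 0 < exp 1 * d := by positivity
  have hS : 0 ≤ S := add_nonneg (mul_nonneg hd0'.le (log_natCast_nonneg N))
    (log_nonneg (by rwa [le_div_iff₀ hε, one_mul]))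
  have ht0 : 0 ≤ t := (mul_nonneg hed.le hS).trans ht
  have hp : 1 / (exp 1 * d) ≤ isolationProb d := inv_exp_mul_le_isolationProb hd0
  have hSt : S ≤ isolationProb d * t := calc
    S = 1 / (exp 1 * d) * (exp 1 * d * S) := by field_simp
    _ ≤ isolationProb d * t :=
        mul_le_mul hp ht (mul_nonneg hed.le hS) ((one_div_pos.2 hed).le.trans hp)
  have hchoose : (N.choose d : ℝ) ≤ (N : ℝ) ^ d := by exact_mod_cast Nat.choose_le_pow N d
  calc (N.choose d : ℝ) * d * (1 - isolationProb d) ^ t ≤ N.choose d * d * exp (-S) := by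
        gcongr
        exact (one_sub_rpow_le_exp_neg_mul (isolationProb_le_one hd0) ht0).trans
          (exp_le_exp.2 (neg_le_neg hSt))
    _ = N.choose d / (N : ℝ) ^ d * ε := by
        rw [exp_neg_natCast_mul_log_add_log_div hN0 hd0 hε]; field_simp
    _ ≤ ε := mul_le_of_le_one_left hε.le (div_le_one_of_le₀ hchoose (by positivity))
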